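/- arXiv:1404.4612 — 2 statements merged into one kernel-verified Lean document; each statement's English description precedes it below -/
import Mathlib

section
/- Suppose ⟨a(x)p, p⟩ ≤ Λ‖p‖² for all x, p ∈ ℝᵈ. Let φ : [0,T] → ℝᵈ be absolutely continuous with φ(0) = x₀ and ∫₀ᵀ L(φ(t), φ'(t)) dt ≤ α. Then sup_{t∈[0,T]} ‖φ(t)‖ ≤ (‖x₀‖ + √(2ΛαT)) · e^{‖M‖T}, where ‖M‖ is the operator norm of M. -/
/-!
Split `φ' = Mφ + (φ' - Mφ)`. The upper ellipticity bound `a(x) ≤ Λ` gives `a(x)⁻¹ ≥ Λ⁻¹`, i.e.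
`‖v - Mx‖² ≤ 2Λ L(x, v)` (Cauchy–Schwarz for the form `a(x)⁻¹`), so by Cauchy–Schwarz in time
`∫₀ᵗ ‖φ' - Mφ‖ ≤ √(T · 2Λα)`. Hence `‖φ(t)‖ ≤ ‖x₀‖ + √(2ΛαT) + ‖M‖ ∫₀ᵗ ‖φ‖`, and Grönwall's
inequality in integral form concludes.
-/

open RealInnerProductSpace MeasureTheory

/-- Multiplication of a vector in `EuclideanSpace ℝ (Fin d)` by a `d × d` real matrix. -/
noncomputable def matVec {d : ℕ} (A : Matrix (Fin d) (Fin d) ℝ)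
    (x : EuclideanSpace ℝ (Fin d)) : EuclideanSpace ℝ (Fin d) := WithLp.toLp 2 (A.mulVec x)

/-- The running cost `L(x,v) = ½⟨a(x)⁻¹(v − Mx), v − Mx⟩` of the exit-time control problem,
where `M` is the closed-loop drift matrix, viewed as a (continuous) linear operator on `ℝᵈ`,
so that `‖M‖` is its operator norm. -/
noncomputable def runCost {d : ℕ}
    (a : EuclideanSpace ℝ (Fin d) → Matrix (Fin d) (Fin d) ℝ)
    (M : EuclideanSpace ℝ (Fin d) →L[ℝ] EuclideanSpace ℝ (Fin d))
    (x v : EuclideanSpace ℝ (Fin d)) : ℝ :=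
  (1 / 2) * ⟪matVec (a x)⁻¹ (v - M x), v - M x⟫

/-- `a` is uniformly elliptic with constants `lam ≤ Lam`:
`lam‖p‖² ≤ ⟨a(x)p, p⟩ ≤ Lam‖p‖²` for all `x, p ∈ ℝᵈ`. -/
def UniformlyElliptic {d : ℕ}
    (a : EuclideanSpace ℝ (Fin d) → Matrix (Fin d) (Fin d) ℝ) (lam Lam : ℝ) : Prop :=
  ∀ x p : EuclideanSpace ℝ (Fin d),
    lam * ‖p‖ ^ 2 ≤ ⟪matVec (a x) p, p⟫ ∧ ⟪matVec (a x) p, p⟫ ≤ Lam * ‖p‖ ^ 2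

/-- `φ` is absolutely continuous on `[0,T]` with (a.e.) derivative `g`: `g` is integrable on
`[0,T]` and `φ(t) = φ(0) + ∫₀ᵗ g(s) ds` for all `t ∈ [0,T]`. -/
def IsAC {d : ℕ} (T : ℝ) (φ g : ℝ → EuclideanSpace ℝ (Fin d)) : Prop :=
  IntegrableOn g (Set.Icc 0 T) ∧
    ∀ t ∈ Set.Icc (0 : ℝ) T, φ t = φ 0 + ∫ s in (0 : ℝ)..t, g s

/-- The action `S_T(φ) = ∫₀ᵀ L(φ(t), φ'(t)) dt` of an absolutely continuous path `φ` with
derivative `g`. -/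
noncomputable def action {d : ℕ}
    (a : EuclideanSpace ℝ (Fin d) → Matrix (Fin d) (Fin d) ℝ)
    (M : EuclideanSpace ℝ (Fin d) →L[ℝ] EuclideanSpace ℝ (Fin d))
    (T : ℝ) (φ g : ℝ → EuclideanSpace ℝ (Fin d)) : ℝ :=
  ∫ t in (0 : ℝ)..T, runCost a M (φ t) (g t)

open Set intervalIntegral
open scoped Matrix

namespace Matrix

variable {n : Type*} [Fintype n]

theorem PosSemidef.dotProduct_mulVec_sq_le {A : Matrix n n ℝ} (hA : A.PosSemidef) (x y : n → ℝ) :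
    (x ⬝ᵥ A *ᵥ y) ^ 2 ≤ (x ⬝ᵥ A *ᵥ x) * (y ⬝ᵥ A *ᵥ y) := by
  let := A.toSeminormedAddCommGroup hA
  let := A.toInnerProductSpace hA
  have hinner (v w : n → ℝ) : inner ℝ v w = v ⬝ᵥ A *ᵥ w := by
    change (A *ᵥ w) ⬝ᵥ star v = _
    rw [star_trivial, dotProduct_comm]
  simpa only [hinner, sq] using real_inner_mul_inner_self_le x y

theorem PosDef.dotProduct_self_le_mul_dotProduct_inv_mulVec [DecidableEq n]
    {A : Matrix n n ℝ} (hA : A.PosDef) {Λ : ℝ} {u : n → ℝ}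
    (hu : u ⬝ᵥ A *ᵥ u ≤ Λ * (u ⬝ᵥ u)) : u ⬝ᵥ u ≤ Λ * (u ⬝ᵥ A⁻¹ *ᵥ u) := by
  have hcs := hA.inv.posSemidef.dotProduct_mulVec_sq_le u (A *ᵥ u)
  rw [mulVec_mulVec, nonsing_inv_mul _ ((isUnit_iff_isUnit_det A).1 hA.isUnit), one_mulVec,
    dotProduct_comm (A *ᵥ u)] at hcs
  have hq : 0 ≤ u ⬝ᵥ A⁻¹ *ᵥ u := by
    simpa using hA.inv.posSemidef.dotProduct_mulVec_nonneg u
  have hnn : 0 ≤ u ⬝ᵥ u := by simpa using dotProduct_self_star_nonneg u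
  rcases hnn.eq_or_lt with h0 | hpos
  · rw [← h0, dotProduct_self_eq_zero.1 h0.symm]; simp
  · nlinarith [mul_le_mul_of_nonneg_left hu hq]

end Matrix

theorem integral_le_sqrt_measureReal_mul_integral_sq {α : Type*} [MeasurableSpace α]
    {μ : Measure α} [IsFiniteMeasure μ] {f : α → ℝ} (hf0 : 0 ≤ᵐ[μ] f) (hf : MemLp f 2 μ) :
    ∫ a, f a ∂μ ≤ √(μ.real univ * ∫ a, f a ^ 2 ∂μ) := by
  have h := integral_mul_le_Lp_mul_Lq_of_nonneg Real.HolderConjugate.two_two hf0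
    (Filter.Eventually.of_forall fun _ => zero_le_one) (by simpa using hf)
    (memLp_const (1 : ℝ))
  simp only [mul_one, one_pow, MeasureTheory.integral_const, smul_eq_mul, Real.rpow_two] at h
  rw [Real.sqrt_mul' _ (integral_nonneg fun a => sq_nonneg (f a)), mul_comm, Real.sqrt_eq_rpow,
    Real.sqrt_eq_rpow]
  exact h

theorem le_mul_exp_of_le_add_mul_integral {f : ℝ → ℝ} {C K a b : ℝ} (hK : 0 ≤ K)
    (hf : ContinuousOn f (Icc a b)) (hle : ∀ t ∈ Icc a b, f t ≤ C + K * ∫ s in a..t, f s) :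
    ∀ t ∈ Icc a b, f t ≤ C * Real.exp (K * (t - a)) := by
  intro t ht
  have hab : a ≤ b := ht.1.trans ht.2
  -- Extending `f` continuously to `ℝ` makes the right-hand side differentiable everywhere.
  set F := IccExtend hab ((Icc a b).domRestrict f)
  have hF : Continuous F := hf.domRestrict.Icc_extend'
  have hFf : ∀ s ∈ Icc a b, F s = f s := fun s hs => IccExtend_of_mem hab _ hs
  set v : ℝ → ℝ := fun r => C + K * ∫ s in a..r, F s
  have hv : ∀ r, HasDerivAt v (K * F r) r := fun r =>
    ((hF.integral_hasStrictDerivAt a r).hasDerivAt.const_mul K).const_add C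
  have hfv : ∀ r ∈ Icc a b, f r ≤ v r := by
    intro r hr
    convert hle r hr using 3
    refine intervalIntegral.integral_congr fun s hs => hFf s ?_
    rw [uIcc_of_le hr.1] at hs
    exact ⟨hs.1, hs.2.trans hr.2⟩
  have hgron := le_gronwallBound_of_liminf_deriv_right_le (f := v) (δ := C) (ε := 0)
    (fun r _ => (hv r).continuousAt.continuousWithinAt)
    (fun r _ _ hlt => (hv r).hasDerivWithinAt.liminf_right_slope_le hlt)
    (by simp [v]) (fun r hr => by
      rw [add_zero, hFf r (Ico_subset_Icc_self hr)]
      exact mul_le_mul_of_nonneg_left (hfv r (Ico_subset_Icc_self hr)) hK) t ht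
  rw [gronwallBound_ε0] at hgron
  exact (hfv t ht).trans hgron

theorem inner_matVec_self {d : ℕ} (A : Matrix (Fin d) (Fin d) ℝ) (p : EuclideanSpace ℝ (Fin d)) :
    ⟪matVec A p, p⟫ = p.ofLp ⬝ᵥ A *ᵥ p.ofLp := by
  rw [EuclideanSpace.inner_eq_star_dotProduct, star_trivial]
  rfl

theorem norm_sq_eq_dotProduct {d : ℕ} (p : EuclideanSpace ℝ (Fin d)) :
    ‖p‖ ^ 2 = p.ofLp ⬝ᵥ p.ofLp := by
  rw [← real_inner_self_eq_norm_sq, EuclideanSpace.inner_eq_star_dotProduct, star_trivial]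

theorem eq_zero_of_inner_matVec_self_le_of_neg {d : ℕ} {A : Matrix (Fin d) (Fin d) ℝ}
    (hA : A.PosSemidef) {Λ : ℝ} (hΛ : Λ < 0) {p : EuclideanSpace ℝ (Fin d)}
    (hp : ⟪matVec A p, p⟫ ≤ Λ * ‖p‖ ^ 2) : p = 0 := by
  have hnn : 0 ≤ ⟪matVec A p, p⟫ := by
    simpa [inner_matVec_self] using hA.dotProduct_mulVec_nonneg p.ofLp
  have : ‖p‖ ^ 2 ≤ 0 := by nlinarith
  exact norm_eq_zero.1 (pow_eq_zero_iff two_ne_zero |>.1 (le_antisymm this (sq_nonneg _)))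

theorem norm_sq_le_mul_inner_matVec_inv {d : ℕ} {A : Matrix (Fin d) (Fin d) ℝ} (hA : A.PosDef)
    {Λ : ℝ} {u : EuclideanSpace ℝ (Fin d)} (hu : ⟪matVec A u, u⟫ ≤ Λ * ‖u‖ ^ 2) :
    ‖u‖ ^ 2 ≤ Λ * ⟪matVec A⁻¹ u, u⟫ := by
  rw [inner_matVec_self, norm_sq_eq_dotProduct] at *
  exact hA.dotProduct_self_le_mul_dotProduct_inv_mulVec hu

theorem norm_sub_sq_le_runCost {d : ℕ} {a : EuclideanSpace ℝ (Fin d) → Matrix (Fin d) (Fin d) ℝ}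
    (M : EuclideanSpace ℝ (Fin d) →L[ℝ] EuclideanSpace ℝ (Fin d)) {x : EuclideanSpace ℝ (Fin d)}
    (ha : (a x).PosDef) {Λ : ℝ} (hup : ∀ p, ⟪matVec (a x) p, p⟫ ≤ Λ * ‖p‖ ^ 2)
    (v : EuclideanSpace ℝ (Fin d)) :
    ‖v - M x‖ ^ 2 ≤ 2 * Λ * runCost a M x v := by
  have := norm_sq_le_mul_inner_matVec_inv ha (hup (v - M x))
  rw [runCost]
  linarith

namespace IsAC

variable {d : ℕ} {T : ℝ} {φ g : ℝ → EuclideanSpace ℝ (Fin d)}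

theorem continuousOn (hAC : IsAC T φ g) : ContinuousOn φ (Icc 0 T) := by
  refine ((continuousOn_const (c := φ 0)).add (continuousOn_primitive hAC.1)).congr fun t ht => ?_
  rw [hAC.2 t ht, integral_of_le ht.1]
  rfl

theorem norm_le_add_integral (hAC : IsAC T φ g)
    (M : EuclideanSpace ℝ (Fin d) →L[ℝ] EuclideanSpace ℝ (Fin d)) {t : ℝ} (ht : t ∈ Icc 0 T) :
    ‖φ t‖ ≤ ‖φ 0‖ + (∫ s in 0..t, ‖g s - M (φ s)‖) + ‖M‖ * ∫ s in 0..t, ‖φ s‖ := by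
  have hsub : Icc 0 t ⊆ Icc 0 T := Icc_subset_Icc_right ht.2
  have hφ : ContinuousOn φ (Icc 0 t) := hAC.continuousOn.mono hsub
  have hMφ : IntervalIntegrable (fun s => M (φ s)) volume 0 t :=
    (M.continuous.comp_continuousOn hφ).intervalIntegrable_of_Icc ht.1
  have hg : IntervalIntegrable g volume 0 t :=
    (intervalIntegrable_iff_integrableOn_Icc_of_le ht.1).2 (hAC.1.mono_set hsub)
  have hsplit : ∫ s in 0..t, g s = (∫ s in 0..t, g s - M (φ s)) + ∫ s in 0..t, M (φ s) := by
    rw [← integral_add (hg.sub hMφ) hMφ]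
    simp
  have hMbound : ‖∫ s in 0..t, M (φ s)‖ ≤ ∫ s in 0..t, ‖M‖ * ‖φ s‖ :=
    norm_integral_le_of_norm_le ht.1 (ae_of_all _ fun s _ => M.le_opNorm (φ s))
      (((continuous_norm.comp_continuousOn hφ).intervalIntegrable_of_Icc ht.1).const_mul ‖M‖)
  calc ‖φ t‖ ≤ ‖φ 0‖ + ‖∫ s in 0..t, g s - M (φ s)‖ + ‖∫ s in 0..t, M (φ s)‖ := by
        rw [hAC.2 t ht, hsplit, ← add_assoc]
        exact norm_add₃_le
    _ ≤ _ := by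
        rw [← intervalIntegral.integral_const_mul]
        linarith [norm_integral_le_integral_norm (μ := volume) (f := fun s => g s - M (φ s)) ht.1]

theorem integrableOn_norm_sub (hAC : IsAC T φ g)
    (M : EuclideanSpace ℝ (Fin d) →L[ℝ] EuclideanSpace ℝ (Fin d)) :
    IntegrableOn (fun s => ‖g s - M (φ s)‖) (Icc 0 T) :=
  (hAC.1.sub (M.continuous.comp_continuousOn hAC.continuousOn).integrableOn_Icc).norm

theorem integrableOn_norm_sub_sq {a : EuclideanSpace ℝ (Fin d) → Matrix (Fin d) (Fin d) ℝ}
    {M : EuclideanSpace ℝ (Fin d) →L[ℝ] EuclideanSpace ℝ (Fin d)} {Λ : ℝ}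
    (hAC : IsAC T φ g) (hapos : ∀ x, (a x).PosDef)
    (hup : ∀ x p : EuclideanSpace ℝ (Fin d), ⟪matVec (a x) p, p⟫ ≤ Λ * ‖p‖ ^ 2)
    (hcost : IntegrableOn (fun t => runCost a M (φ t) (g t)) (Icc 0 T)) :
    IntegrableOn (fun s => ‖g s - M (φ s)‖ ^ 2) (Icc 0 T) :=
  (hcost.const_mul (2 * Λ)).mono' ((hAC.integrableOn_norm_sub M).aestronglyMeasurable.pow 2)
    (ae_of_all _ fun s => by simpa using norm_sub_sq_le_runCost M (hapos _) (hup _) (g s))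

theorem integral_norm_sub_le_sqrt {a : EuclideanSpace ℝ (Fin d) → Matrix (Fin d) (Fin d) ℝ}
    {M : EuclideanSpace ℝ (Fin d) →L[ℝ] EuclideanSpace ℝ (Fin d)} {Λ α : ℝ}
    (hAC : IsAC T φ g) (hapos : ∀ x, (a x).PosDef)
    (hup : ∀ x p : EuclideanSpace ℝ (Fin d), ⟪matVec (a x) p, p⟫ ≤ Λ * ‖p‖ ^ 2) (hΛ : 0 ≤ Λ)
    (hcost : IntegrableOn (fun t => runCost a M (φ t) (g t)) (Icc 0 T))
    (hact : action a M T φ g ≤ α) {t : ℝ} (ht : t ∈ Icc 0 T) :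
    ∫ s in 0..t, ‖g s - M (φ s)‖ ≤ √(2 * Λ * α * T) := by
  set u : ℝ → ℝ := fun s => ‖g s - M (φ s)‖
  have hT : 0 ≤ T := ht.1.trans ht.2
  have hu_sq_int : IntegrableOn (fun s => u s ^ 2) (Icc 0 T) :=
    hAC.integrableOn_norm_sub_sq hapos hup hcost
  have hL2 : ∫ s in Ioc 0 t, u s ^ 2 ≤ 2 * Λ * α := calc
    _ ≤ ∫ s in Ioc 0 T, u s ^ 2 :=
        setIntegral_mono_set (hu_sq_int.mono_set Ioc_subset_Icc_self)
          (ae_of_all _ fun s => sq_nonneg _) (Ioc_subset_Ioc_right ht.2).eventuallyLE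
    _ ≤ ∫ s in Ioc 0 T, 2 * Λ * runCost a M (φ s) (g s) :=
        integral_mono (hu_sq_int.mono_set Ioc_subset_Icc_self)
          (IntegrableOn.mono_set (hcost.const_mul _) Ioc_subset_Icc_self)
          fun s => norm_sub_sq_le_runCost M (hapos _) (hup _) (g s)
    _ = 2 * Λ * action a M T φ g := by
        rw [MeasureTheory.integral_const_mul, action, integral_of_le hT]
    _ ≤ 2 * Λ * α := by gcongr
  have hsub : Ioc 0 t ⊆ Icc 0 T := Ioc_subset_Icc_self.trans (Icc_subset_Icc_right ht.2)
  have hu_memLp : MemLp u 2 (volume.restrict (Ioc 0 t)) :=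
    (memLp_two_iff_integrable_sq
      ((hAC.integrableOn_norm_sub M).mono_set hsub).aestronglyMeasurable).2
      (hu_sq_int.mono_set hsub)
  calc ∫ s in 0..t, u s = ∫ s in Ioc 0 t, u s := integral_of_le ht.1
    _ ≤ √(t * ∫ s in Ioc 0 t, u s ^ 2) := by
        simpa [ht.1] using integral_le_sqrt_measureReal_mul_integral_sq
          (ae_of_all _ fun s => norm_nonneg _) hu_memLp
    _ ≤ √(2 * Λ * α * T) := by
        refine Real.sqrt_le_sqrt ?_
        have : 0 ≤ ∫ s in Ioc 0 t, u s ^ 2 :=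
          setIntegral_nonneg measurableSet_Ioc fun s _ => sq_nonneg (u s)
        nlinarith [ht.2]

end IsAC

/-- Grönwall-type a priori bound for paths of bounded action: if
`⟨a(x)p, p⟩ ≤ Λ‖p‖²` for all `x, p`, and `φ` is absolutely continuous on `[0,T]` with
`φ(0) = x₀` and action at most `α`, then
`sup_{t∈[0,T]} ‖φ(t)‖ ≤ (‖x₀‖ + √(2ΛαT))·e^{‖M‖T}`. -/
theorem sup_norm_bound_of_action_le {d : ℕ}
    (a : EuclideanSpace ℝ (Fin d) → Matrix (Fin d) (Fin d) ℝ)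
    (M : EuclideanSpace ℝ (Fin d) →L[ℝ] EuclideanSpace ℝ (Fin d))
    (hapos : ∀ x, (a x).PosDef)
    (Lam : ℝ)
    (hup : ∀ x p : EuclideanSpace ℝ (Fin d), ⟪matVec (a x) p, p⟫ ≤ Lam * ‖p‖ ^ 2)
    (T α : ℝ) (x₀ : EuclideanSpace ℝ (Fin d)) (φ g : ℝ → EuclideanSpace ℝ (Fin d))
    (hAC : IsAC T φ g) (hx₀ : φ 0 = x₀)
    (hcost : IntegrableOn (fun t => runCost a M (φ t) (g t)) (Set.Icc 0 T))
    (hact : action a M T φ g ≤ α) :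
    ∀ t ∈ Set.Icc (0 : ℝ) T,
      ‖φ t‖ ≤ (‖x₀‖ + Real.sqrt (2 * Lam * α * T)) * Real.exp (‖M‖ * T) := by
  intro t ht
  rcases lt_or_ge Lam 0 with hneg | hΛ
  · rw [eq_zero_of_inner_matVec_self_le_of_neg (hapos 0).posSemidef hneg (hup 0 (φ t)), norm_zero]
    positivity
  have hrec : ∀ s ∈ Icc 0 T,
      ‖φ s‖ ≤ ‖x₀‖ + √(2 * Lam * α * T) + ‖M‖ * ∫ r in 0..s, ‖φ r‖ := fun s hs => by
    have h1 := hAC.norm_le_add_integral M hs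
    have h2 := hAC.integral_norm_sub_le_sqrt hapos hup hΛ hcost hact hs
    rw [hx₀] at h1
    linarith
  calc ‖φ t‖ ≤ (‖x₀‖ + √(2 * Lam * α * T)) * Real.exp (‖M‖ * (t - 0)) :=
        le_mul_exp_of_le_add_mul_integral (norm_nonneg M)
          (continuous_norm.comp_continuousOn hAC.continuousOn) hrec t ht
    _ ≤ (‖x₀‖ + √(2 * Lam * α * T)) * Real.exp (‖M‖ * T) := by
        gcongr
        linarith [ht.2]
end

section
/- Suppose ⟨a(x)p, p⟩ ≥ λ‖p‖² for all x, p ∈ ℝᵈ, with λ > 0. Then for all x, y ∈ ℝᵈ, the quasipotential satisfies I(x,y) ≤ (1/(2λ)) · ‖y − x‖ · (1 + ‖M‖·max(‖x‖, ‖y‖))², where ‖M‖ is the operator norm of M. -/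
open RealInnerProductSpace MeasureTheory

/-- The quasipotential `I(x,y)`: the infimum of the action `S_T(φ)` over all `T ≥ 0` and all
absolutely continuous paths `φ : [0,T] → ℝᵈ` (with integrable running cost, i.e. finite
action) with `φ(0) = x` and `φ(T) = y`. -/
noncomputable def quasipotential {d : ℕ}
    (a : EuclideanSpace ℝ (Fin d) → Matrix (Fin d) (Fin d) ℝ)
    (M : EuclideanSpace ℝ (Fin d) →L[ℝ] EuclideanSpace ℝ (Fin d))
    (x y : EuclideanSpace ℝ (Fin d)) : ℝ :=
  sInf {r : ℝ | ∃ T : ℝ, 0 ≤ T ∧ ∃ φ g : ℝ → EuclideanSpace ℝ (Fin d),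
    IsAC T φ g ∧ IntegrableOn (fun t => runCost a M (φ t) (g t)) (Set.Icc 0 T) ∧
    φ 0 = x ∧ φ T = y ∧ r = action a M T φ g}

/-!
Follow the segment from `x` to `y` at unit speed, i.e. in time `T = ‖y - x‖`. By convexity of
the norm the path stays in the ball of radius `max ‖x‖ ‖y‖`, so `‖φ' - M φ‖ ≤ 1 + ‖M‖ max ‖x‖ ‖y‖`.
Coercivity of `a` gives `⟨a⁻¹ w, w⟩ ≤ ‖w‖² / λ` (Cauchy–Schwarz for `p = a⁻¹ w`, since
`λ ‖p‖² ≤ ⟨p, w⟩`), and it also makes `a` invertible, so the running cost is continuous along the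
path. Integrating the pointwise bound over `[0, T]` gives the estimate. For `x = y` the path is
constant because `0⁻¹ = 0`, so that case needs no separate treatment.
-/

theorem Continuous.matrix_inv_of_det_ne_zero {X R n : Type*} [TopologicalSpace X] [Fintype n]
    [DecidableEq n] [Field R] [TopologicalSpace R] [IsTopologicalRing R] [ContinuousInv₀ R]
    {A : X → Matrix n n R} (hA : Continuous A) (hdet : ∀ x, (A x).det ≠ 0) :
    Continuous fun x => (A x)⁻¹ := by
  simp only [Matrix.inv_def, Ring.inverse_eq_inv']
  exact (hA.matrix_det.inv₀ hdet).smul hA.matrix_adjugate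

section Coercive

variable {d : ℕ} {A : Matrix (Fin d) (Fin d) ℝ} {lam : ℝ}

theorem Matrix.isUnit_det_of_coercive (hlam : 0 < lam)
    (hA : ∀ p, lam * ‖p‖ ^ 2 ≤ ⟪matVec A p, p⟫) : IsUnit A.det := by
  rw [← Matrix.isUnit_iff_isUnit_det, ← Matrix.mulVec_injective_iff_isUnit, ← Matrix.coe_mulVecLin,
    injective_iff_map_eq_zero]
  intro v hv
  have h := hA (WithLp.toLp 2 v)
  have hmat : matVec A (WithLp.toLp 2 v) = 0 := congrArg (WithLp.toLp 2) hv
  rw [hmat, inner_zero_left] at h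
  have hsq : ‖WithLp.toLp 2 v‖ ^ 2 ≤ 0 := nonpos_of_mul_nonpos_right h hlam
  simpa using hsq

theorem matVec_matVec_inv (hA : IsUnit A.det) (w : EuclideanSpace ℝ (Fin d)) :
    matVec A (matVec A⁻¹ w) = w := by
  simp [matVec, Matrix.mulVec_mulVec, Matrix.mul_nonsing_inv _ hA]

theorem inner_matVec_inv_nonneg (hlam : 0 < lam) (hA : ∀ p, lam * ‖p‖ ^ 2 ≤ ⟪matVec A p, p⟫)
    (w : EuclideanSpace ℝ (Fin d)) : 0 ≤ ⟪matVec A⁻¹ w, w⟫ := by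
  have h := hA (matVec A⁻¹ w)
  rw [matVec_matVec_inv (Matrix.isUnit_det_of_coercive hlam hA), real_inner_comm] at h
  exact (by positivity : 0 ≤ lam * _).trans h

theorem inner_matVec_inv_le (hlam : 0 < lam) (hA : ∀ p, lam * ‖p‖ ^ 2 ≤ ⟪matVec A p, p⟫)
    (w : EuclideanSpace ℝ (Fin d)) : ⟪matVec A⁻¹ w, w⟫ ≤ ‖w‖ ^ 2 / lam := by
  set p := matVec A⁻¹ w
  have hcoer : lam * ‖p‖ ^ 2 ≤ ⟪p, w⟫ := by
    have h := hA p
    rwa [matVec_matVec_inv (Matrix.isUnit_det_of_coercive hlam hA), real_inner_comm] at h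
  have hcs : ⟪p, w⟫ ≤ ‖p‖ * ‖w‖ := real_inner_le_norm p w
  rw [le_div_iff₀ hlam]
  nlinarith [sq_nonneg (lam * ‖p‖ - ‖w‖)]

end Coercive

section RunCost

variable {d : ℕ} {a : EuclideanSpace ℝ (Fin d) → Matrix (Fin d) (Fin d) ℝ}
  {M : EuclideanSpace ℝ (Fin d) →L[ℝ] EuclideanSpace ℝ (Fin d)} {lam : ℝ}

theorem runCost_nonneg (hlam : 0 < lam)
    (hlow : ∀ x p : EuclideanSpace ℝ (Fin d), lam * ‖p‖ ^ 2 ≤ ⟪matVec (a x) p, p⟫)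
    (x v : EuclideanSpace ℝ (Fin d)) : 0 ≤ runCost a M x v :=
  mul_nonneg (by norm_num) (inner_matVec_inv_nonneg hlam (hlow x) _)

theorem runCost_le (hlam : 0 < lam)
    (hlow : ∀ x p : EuclideanSpace ℝ (Fin d), lam * ‖p‖ ^ 2 ≤ ⟪matVec (a x) p, p⟫)
    (x v : EuclideanSpace ℝ (Fin d)) : runCost a M x v ≤ ‖v - M x‖ ^ 2 / (2 * lam) := by
  have h := inner_matVec_inv_le hlam (hlow x) (v - M x)
  rw [runCost, mul_comm 2 lam, ← div_div]
  linarith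

theorem Continuous.runCost (hacont : Continuous a) (hdet : ∀ x, (a x).det ≠ 0)
    {φ g : ℝ → EuclideanSpace ℝ (Fin d)} (hφ : Continuous φ) (hg : Continuous g) :
    Continuous fun t => runCost a M (φ t) (g t) := by
  have hw : Continuous fun t => g t - M (φ t) := hg.sub (M.continuous.comp hφ)
  have hinv := (hacont.comp hφ).matrix_inv_of_det_ne_zero fun t => hdet (φ t)
  have hmv : Continuous fun t => matVec (a (φ t))⁻¹ (g t - M (φ t)) :=
    (PiLp.continuous_toLp 2 _).comp (hinv.matrix_mulVec ((PiLp.continuous_ofLp 2 _).comp hw))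
  exact continuous_const.mul (hmv.inner hw)

theorem quasipotential_le_action (hnonneg : ∀ x v, 0 ≤ runCost a M x v) {T : ℝ} (hT : 0 ≤ T)
    {φ g : ℝ → EuclideanSpace ℝ (Fin d)} (hφg : IsAC T φ g)
    (hint : IntegrableOn (fun t => runCost a M (φ t) (g t)) (Set.Icc 0 T)) :
    quasipotential a M (φ 0) (φ T) ≤ action a M T φ g := by
  refine csInf_le ⟨0, ?_⟩ ⟨T, hT, φ, g, hφg, hint, rfl, rfl, rfl⟩
  rintro r ⟨S, hS, ψ, h, -, -, -, -, rfl⟩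
  exact intervalIntegral.integral_nonneg hS fun t _ => hnonneg _ _

theorem action_le_of_runCost_le (hnonneg : ∀ x v, 0 ≤ runCost a M x v) {T K : ℝ} (hT : 0 ≤ T)
    {φ g : ℝ → EuclideanSpace ℝ (Fin d)} (hK : ∀ t ∈ Set.Icc 0 T, runCost a M (φ t) (g t) ≤ K) :
    action a M T φ g ≤ T * K := by
  have h := intervalIntegral.norm_integral_le_of_norm_le_const (a := 0) (b := T) (C := K)
    (f := fun t => runCost a M (φ t) (g t)) fun t ht => by
      rw [Set.uIoc_of_le hT] at ht
      rw [Real.norm_of_nonneg (hnonneg _ _)]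
      exact hK t (Set.Ioc_subset_Icc_self ht)
  rw [sub_zero, abs_of_nonneg hT, mul_comm] at h
  exact (le_abs_self _).trans h

end RunCost

section Segment

variable {E : Type*} [NormedAddCommGroup E] [NormedSpace ℝ E]

theorem norm_lineMap_le_max (x y : E) {c : ℝ} (hc : c ∈ Set.Icc 0 1) :
    ‖AffineMap.lineMap x y c‖ ≤ max ‖x‖ ‖y‖ :=
  (convexOn_norm convex_univ).le_on_segment trivial trivial (lineMap_mem_segment ℝ x y hc)

theorem lineMap_div_norm_sub_self (x y : E) :
    AffineMap.lineMap x y (‖y - x‖ / ‖y - x‖) = y := by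
  rcases eq_or_ne y x with rfl | hne
  · simp
  · rw [div_self (norm_ne_zero_iff.2 (sub_ne_zero.2 hne)), AffineMap.lineMap_apply_one]

end Segment

theorem isAC_lineMap {d : ℕ} (x y : EuclideanSpace ℝ (Fin d)) (T : ℝ) :
    IsAC T (fun t => AffineMap.lineMap x y (t / T)) fun _ => T⁻¹ • (y - x) := by
  refine ⟨integrableOn_const measure_Icc_lt_top.ne, fun t _ => ?_⟩
  rw [intervalIntegral.integral_const, sub_zero, smul_smul, ← div_eq_mul_inv]
  simp only [AffineMap.lineMap_apply_module', zero_div, zero_smul, zero_add]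
  exact add_comm _ _

theorem quasipotential_upper_bound_general {d : ℕ}
    (a : EuclideanSpace ℝ (Fin d) → Matrix (Fin d) (Fin d) ℝ)
    (M : EuclideanSpace ℝ (Fin d) →L[ℝ] EuclideanSpace ℝ (Fin d))
    (hacont : Continuous a)
    (lam : ℝ) (hlam : 0 < lam)
    (hlow : ∀ x p : EuclideanSpace ℝ (Fin d), lam * ‖p‖ ^ 2 ≤ ⟪matVec (a x) p, p⟫) :
    ∀ x y : EuclideanSpace ℝ (Fin d),
      quasipotential a M x y ≤
        (1 / (2 * lam)) * ‖y - x‖ * (1 + ‖M‖ * max ‖x‖ ‖y‖) ^ 2 := by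
  intro x y
  set T := ‖y - x‖
  set φ : ℝ → EuclideanSpace ℝ (Fin d) := fun t => AffineMap.lineMap x y (t / T)
  set u := T⁻¹ • (y - x)
  set C := 1 + ‖M‖ * max ‖x‖ ‖y‖
  have hnonneg := runCost_nonneg (M := M) hlam hlow
  have hu : ‖u‖ ≤ 1 := by
    rw [norm_smul, norm_inv, norm_norm]
    exact inv_mul_le_one_of_le₀ le_rfl (norm_nonneg _)
  have hcost : ∀ t ∈ Set.Icc 0 T, runCost a M (φ t) u ≤ C ^ 2 / (2 * lam) := by
    rintro t ⟨ht0, htT⟩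
    have hφ : ‖φ t‖ ≤ max ‖x‖ ‖y‖ :=
      norm_lineMap_le_max x y ⟨div_nonneg ht0 (norm_nonneg _), div_le_one_of_le₀ htT (norm_nonneg _)⟩
    have hw : ‖u - M (φ t)‖ ≤ C :=
      (norm_sub_le _ _).trans (add_le_add hu ((M.le_opNorm _).trans (by gcongr)))
    exact (runCost_le hlam hlow _ _).trans (by gcongr)
  have hint : IntegrableOn (fun t => runCost a M (φ t) u) (Set.Icc 0 T) :=
    (Continuous.runCost hacont (fun z => (Matrix.isUnit_det_of_coercive hlam (hlow z)).ne_zero)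
      (by fun_prop) continuous_const).integrableOn_Icc
  calc quasipotential a M x y = quasipotential a M (φ 0) (φ T) := by
        simp [φ, T, lineMap_div_norm_sub_self]
    _ ≤ action a M T φ fun _ => u :=
        quasipotential_le_action hnonneg (norm_nonneg _) (isAC_lineMap x y T) hint
    _ ≤ T * (C ^ 2 / (2 * lam)) := action_le_of_runCost_le hnonneg (norm_nonneg _) hcost
    _ = 1 / (2 * lam) * T * C ^ 2 := by ring

/-- Upper bound for the quasipotential via the unit-speed straight-line
path: if `⟨a(x)p, p⟩ ≥ λ‖p‖²` for all `x, p`, with `λ > 0`, then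
`I(x,y) ≤ (1/(2λ))·‖y − x‖·(1 + ‖M‖·max(‖x‖, ‖y‖))²`. -/
theorem quasipotential_upper_bound {d : ℕ}
    (a : EuclideanSpace ℝ (Fin d) → Matrix (Fin d) (Fin d) ℝ)
    (M : EuclideanSpace ℝ (Fin d) →L[ℝ] EuclideanSpace ℝ (Fin d))
    (hapos : ∀ x, (a x).PosDef) (hacont : Continuous a)
    (lam : ℝ) (hlam : 0 < lam)
    (hlow : ∀ x p : EuclideanSpace ℝ (Fin d), lam * ‖p‖ ^ 2 ≤ ⟪matVec (a x) p, p⟫) :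
    ∀ x y : EuclideanSpace ℝ (Fin d),
      quasipotential a M x y ≤
        (1 / (2 * lam)) * ‖y - x‖ * (1 + ‖M‖ * max ‖x‖ ‖y‖) ^ 2 :=
  quasipotential_upper_bound_general a M hacont lam hlam hlow
end
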